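/- arXiv:2604.02844 — 2 statements merged into one kernel-verified Lean document; each statement's English description precedes it below -/
import Mathlib

section
/- Let K ⊆ ℝ^N be a closed convex set, and let x^1, x^2 : [0,∞) → ℝ^N be Lipschitz functions satisfying ẋ^a(t) = u^0 - ξ^a(t) for a.e. t, where ξ^a(t) belongs to the normal cone of K at x^a(t), and x^1(0) = x^2(0). Then x^1(t) = x^2(t) for all t ≥ 0. -/
/-!
Monotonicity of the normal cone makes `t ↦ ‖x¹(t) - x²(t)‖²` have a.e. nonpositive derivative
`-2⟪ξ¹ - ξ², x¹ - x²⟫`. This function is locally Lipschitz, hence absolutely continuous, so by the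
fundamental theorem of calculus it is nonincreasing; as it vanishes at `0`, it vanishes everywhere.
-/

open scoped RealInnerProductSpace
open MeasureTheory Set

theorem AbsolutelyContinuousOnInterval.le_of_ae_deriv_nonpos {f : ℝ → ℝ} {a b : ℝ}
    (hab : a ≤ b) (hf : AbsolutelyContinuousOnInterval f a b)
    (hderiv : ∀ᵐ t ∂volume.restrict (Ioc a b), deriv f t ≤ 0) :
    f b ≤ f a := by
  have hint : ∫ t in a..b, deriv f t ≤ 0 := by
    rw [intervalIntegral.integral_of_le hab]
    exact integral_nonpos_of_ae hderiv
  rw [hf.integral_deriv_eq_sub] at hint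
  linarith

theorem LipschitzWith.absolutelyContinuousOnInterval_norm_sub_sq
    {E : Type*} [NormedAddCommGroup E] {x y : ℝ → E} {Kx Ky : NNReal}
    (hx : LipschitzWith Kx x) (hy : LipschitzWith Ky y) (a b : ℝ) :
    AbsolutelyContinuousOnInterval (fun t => ‖x t - y t‖ ^ 2) a b := by
  have hnorm : AbsolutelyContinuousOnInterval (fun t => ‖x t - y t‖) a b :=
    (lipschitzWith_one_norm.comp (hx.sub hy)).lipschitzOnWith.absolutelyContinuousOnInterval
  simpa only [sq] using hnorm.fun_mul hnorm

theorem inner_sub_sub_nonneg_of_normalCone {E : Type*} [NormedAddCommGroup E]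
    [InnerProductSpace ℝ E] {K : Set E} {x₁ x₂ ξ₁ ξ₂ : E} (hx₁ : x₁ ∈ K) (hx₂ : x₂ ∈ K)
    (hξ₁ : ∀ y ∈ K, ⟪ξ₁, y - x₁⟫ ≤ 0) (hξ₂ : ∀ y ∈ K, ⟪ξ₂, y - x₂⟫ ≤ 0) :
    0 ≤ ⟪ξ₁ - ξ₂, x₁ - x₂⟫ := by
  have h₁ := hξ₁ x₂ hx₂
  have h₂ := hξ₂ x₁ hx₁
  rw [← neg_sub, inner_neg_right] at h₁
  rw [inner_sub_left]
  linarith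

theorem deriv_norm_sub_sq_nonpos_of_normalCone {E : Type*} [NormedAddCommGroup E]
    [InnerProductSpace ℝ E] {K : Set E} {x₁ x₂ : ℝ → E} {u ξ₁ ξ₂ : E} {t : ℝ}
    (hx₁ : x₁ t ∈ K) (hx₂ : x₂ t ∈ K)
    (hd₁ : HasDerivAt x₁ (u - ξ₁) t) (hd₂ : HasDerivAt x₂ (u - ξ₂) t)
    (hξ₁ : ∀ y ∈ K, ⟪ξ₁, y - x₁ t⟫ ≤ 0) (hξ₂ : ∀ y ∈ K, ⟪ξ₂, y - x₂ t⟫ ≤ 0) :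
    deriv (fun s => ‖x₁ s - x₂ s‖ ^ 2) t ≤ 0 := by
  have hd : HasDerivAt (fun s => x₁ s - x₂ s) (ξ₂ - ξ₁) t := by
    simpa only [sub_sub_sub_cancel_left] using hd₁.fun_sub hd₂
  rw [hd.norm_sq.deriv, real_inner_comm, ← neg_sub, inner_neg_left]
  nlinarith [inner_sub_sub_nonneg_of_normalCone hx₁ hx₂ hξ₁ hξ₂]

theorem first_order_inclusion_unique_general {N : ℕ} (K : Set (EuclideanSpace ℝ (Fin N)))
    (u0 : EuclideanSpace ℝ (Fin N))
    (x1 x2 ξ1 ξ2 : ℝ → EuclideanSpace ℝ (Fin N)) (L1 L2 : NNReal)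
    (hlip1 : LipschitzWith L1 x1) (hlip2 : LipschitzWith L2 x2)
    (hmem1 : ∀ t, 0 ≤ t → x1 t ∈ K) (hmem2 : ∀ t, 0 ≤ t → x2 t ∈ K)
    (hode1 : ∀ᵐ t ∂(MeasureTheory.volume.restrict (Set.Ici (0:ℝ))),
      HasDerivAt x1 (u0 - ξ1 t) t ∧ ∀ y ∈ K, ⟪ξ1 t, y - x1 t⟫ ≤ 0)
    (hode2 : ∀ᵐ t ∂(MeasureTheory.volume.restrict (Set.Ici (0:ℝ))),
      HasDerivAt x2 (u0 - ξ2 t) t ∧ ∀ y ∈ K, ⟪ξ2 t, y - x2 t⟫ ≤ 0)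
    (hinit : x1 0 = x2 0) :
    ∀ t, 0 ≤ t → x1 t = x2 t := by
  intro b hb
  have hsub : Ioc 0 b ⊆ Ici (0 : ℝ) := fun _ ht => ht.1.le
  have hderiv : ∀ᵐ t ∂volume.restrict (Ioc 0 b), deriv (fun s => ‖x1 s - x2 s‖ ^ 2) t ≤ 0 := by
    filter_upwards [ae_restrict_of_ae_restrict_of_subset hsub hode1,
      ae_restrict_of_ae_restrict_of_subset hsub hode2,
      ae_restrict_mem measurableSet_Ioc] with t h1 h2 ht
    exact deriv_norm_sub_sq_nonpos_of_normalCone (hmem1 t ht.1.le) (hmem2 t ht.1.le)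
      h1.1 h2.1 h1.2 h2.2
  have hle := AbsolutelyContinuousOnInterval.le_of_ae_deriv_nonpos hb
    (hlip1.absolutelyContinuousOnInterval_norm_sub_sq hlip2 0 b) hderiv
  rw [hinit, sub_self, norm_zero, zero_pow two_ne_zero] at hle
  rw [← sub_eq_zero, ← norm_eq_zero]
  exact pow_eq_zero_iff two_ne_zero |>.mp (le_antisymm hle (by positivity))

/-- Uniqueness for the first-order differential inclusion
`ẋ(t) = u⁰ - ξ(t)`, `ξ(t) ∈ N_{x(t)} K`, with `K` closed convex. -/
theorem first_order_inclusion_unique {N : ℕ} (K : Set (EuclideanSpace ℝ (Fin N)))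
    (hK_closed : IsClosed K) (hK_convex : Convex ℝ K)
    (u0 : EuclideanSpace ℝ (Fin N))
    (x1 x2 ξ1 ξ2 : ℝ → EuclideanSpace ℝ (Fin N)) (L1 L2 : NNReal)
    (hlip1 : LipschitzWith L1 x1) (hlip2 : LipschitzWith L2 x2)
    (hmem1 : ∀ t, 0 ≤ t → x1 t ∈ K) (hmem2 : ∀ t, 0 ≤ t → x2 t ∈ K)
    (hode1 : ∀ᵐ t ∂(MeasureTheory.volume.restrict (Set.Ici (0:ℝ))),
      HasDerivAt x1 (u0 - ξ1 t) t ∧ ∀ y ∈ K, ⟪ξ1 t, y - x1 t⟫ ≤ 0)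
    (hode2 : ∀ᵐ t ∂(MeasureTheory.volume.restrict (Set.Ici (0:ℝ))),
      HasDerivAt x2 (u0 - ξ2 t) t ∧ ∀ y ∈ K, ⟪ξ2 t, y - x2 t⟫ ≤ 0)
    (hinit : x1 0 = x2 0) :
    ∀ t, 0 ≤ t → x1 t = x2 t :=
  first_order_inclusion_unique_general K u0 x1 x2 ξ1 ξ2 L1 L2 hlip1 hlip2 hmem1 hmem2 hode1 hode2
    hinit
end

section
/- Sticky-particle Oleinik estimate: let x_1,…,x_N : [0,∞) → ℝ be Lipschitz trajectories with x_i(0) + 2r ≤ x_{i+1}(0), such that the order is preserved (x_i(t) ≤ x_{i+1}(t) - 2r or x_{i+1}(t) = x_i(t) + 2r with equal velocities after contact), and suppose that on any interval during which particles i-1 and i are never in contact, u_{i-1} = ẋ_{i-1} is nondecreasing and u_i = ẋ_i is nonincreasing in time. Then for every t > 0 at which particles i-1 and i are not in contact, (u_i(t) - u_{i-1}(t))/(x_i(t) - x_{i-1}(t)) < 1/t. -/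
/-! The gap `d = x i - x (i-1)` has derivative `w = u i - u (i-1)`, which is nonincreasing while
the two particles are apart. Hence `d t - d 0 = ∫₀ᵗ w ≥ t w(t)`, and since `d 0 > 0` this gives
`t w(t) < d t`. -/

open Set

theorem mul_sub_le_sub_of_hasDerivAt_of_antitoneOn {f f' : ℝ → ℝ} {a b : ℝ} (hab : a ≤ b)
    (hf : ∀ s ∈ Icc a b, HasDerivAt f (f' s) s) (hf' : AntitoneOn f' (Icc a b)) :
    f' b * (b - a) ≤ f b - f a := by
  refine (convex_Icc a b).mul_sub_le_image_sub_of_le_deriv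
    (fun s hs => (hf s hs).continuousAt.continuousWithinAt)
    (fun s hs => (hf s (interior_subset hs)).differentiableAt.differentiableWithinAt)
    (fun s hs => ?_) a (left_mem_Icc.2 hab) b (right_mem_Icc.2 hab) hab
  have hs' : s ∈ Icc a b := interior_subset hs
  rw [(hf s hs').deriv]
  exact hf' hs' (right_mem_Icc.2 hab) hs'.2

theorem div_lt_one_div_of_hasDerivAt_of_antitoneOn {d w : ℝ → ℝ} {t : ℝ} (ht : 0 < t)
    (hd : ∀ s ∈ Icc 0 t, HasDerivAt d (w s) s) (hw : AntitoneOn w (Icc 0 t))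
    (hd₀ : 0 < d 0) (hdt : 0 < d t) :
    w t / d t < 1 / t := by
  have hgrowth : w t * (t - 0) ≤ d t - d 0 :=
    mul_sub_le_sub_of_hasDerivAt_of_antitoneOn ht.le hd hw
  rw [div_lt_div_iff₀ hdt ht]
  linarith

theorem sticky_oleinik_general (N : ℕ) (r : ℝ) (hr : 0 < r)
    (x u : ℕ → ℝ → ℝ) (i : ℕ) (hiN : i < N)
    (t : ℝ) (ht : 0 < t)
    (hderiv : ∀ j : ℕ, j < N → ∀ s ∈ Set.Icc 0 t, HasDerivAt (x j) (u j s) s)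
    (hnocontact : ∀ s ∈ Set.Icc 0 t, 2 * r < x i s - x (i - 1) s)
    (hmono : MonotoneOn (u (i - 1)) (Set.Icc 0 t))
    (hanti : AntitoneOn (u i) (Set.Icc 0 t)) :
    (u i t - u (i - 1) t) / (x i t - x (i - 1) t) < 1 / t := by
  have hgap_pos : ∀ s ∈ Icc 0 t, 0 < x i s - x (i - 1) s := fun s hs =>
    lt_trans (by positivity) (hnocontact s hs)
  refine div_lt_one_div_of_hasDerivAt_of_antitoneOn ht
    (fun s hs => (hderiv i hiN s hs).sub (hderiv (i - 1) (by omega) s hs))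
    (fun a ha b hb hab => sub_le_sub (hanti ha hb hab) (hmono ha hb hab))
    (hgap_pos 0 (left_mem_Icc.2 ht.le)) (hgap_pos t (right_mem_Icc.2 ht.le))

/-- Sticky-particle Oleinik estimate: if particles `i-1` and `i` have not been in
contact on `[0,t]`, the velocity of `i-1` being nondecreasing and that of `i`
nonincreasing in time, then `(u_i(t) - u_{i-1}(t))/(x_i(t) - x_{i-1}(t)) < 1/t`. -/
theorem sticky_oleinik (N : ℕ) (r : ℝ) (hr : 0 < r)
    (x u : ℕ → ℝ → ℝ) (i : ℕ) (hi : 1 ≤ i) (hiN : i < N)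
    (t : ℝ) (ht : 0 < t)
    (hderiv : ∀ j : ℕ, j < N → ∀ s ∈ Set.Icc 0 t, HasDerivAt (x j) (u j s) s)
    (hinit : x (i - 1) 0 + 2 * r ≤ x i 0)
    (hnocontact : ∀ s ∈ Set.Icc 0 t, 2 * r < x i s - x (i - 1) s)
    (hmono : MonotoneOn (u (i - 1)) (Set.Icc 0 t))
    (hanti : AntitoneOn (u i) (Set.Icc 0 t)) :
    (u i t - u (i - 1) t) / (x i t - x (i - 1) t) < 1 / t :=
  sticky_oleinik_general N r hr x u i hiN t ht hderiv hnocontact hmono hanti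
end
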